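/- Fix N ≥ 1. For every triangle singularity type T among the fourteen and for every embedding of P(T) into Λ_N with image P and primitive hull P̃, the quasi-lattice Λ_N/P̃ (with the canonically induced ℚ-valued bilinear form) contains no element β with β² = −1. -/

import Mathlib

open scoped Classical

namespace Urabe

/-! ### Bilinear forms attached to Gram matrices -/

/-- The integral bilinear form attached to a Gram matrix. -/
def bilinZ {ι : Type*} [Fintype ι] (B : Matrix ι ι ℤ) (x y : ι → ℤ) : ℤ :=
  ∑ i, ∑ j, x i * B i j * y j

/-- The rational bilinear form attached to an integral Gram matrix. -/
def bilinQ {ι : Type*} [Fintype ι] (B : Matrix ι ι ℤ) (x y : ι → ℚ) : ℚ :=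
  ∑ i, ∑ j, x i * (B i j : ℚ) * y j

/-! ### Star graphs `T_{p,q,r}` and their lattices -/

/-- Adjacency for the star graph `T_{p,q,r}`: vertex `0` is the center, the three
arms consist of the vertices `1,…,p-1`, `p,…,p+q-2` and `p+q-1,…,p+q+r-3`. -/
def starAdj (p q r i j : ℕ) : Prop :=
  (i = 0 ∧ (j = 1 ∨ j = p ∨ j = p + q - 1)) ∨
  (j = 0 ∧ (i = 1 ∨ i = p ∨ i = p + q - 1)) ∨
  (j = i + 1 ∧ ((1 ≤ i ∧ j ≤ p - 1) ∨ (p ≤ i ∧ j ≤ p + q - 2) ∨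
      (p + q - 1 ≤ i ∧ j ≤ p + q + r - 3))) ∨
  (i = j + 1 ∧ ((1 ≤ j ∧ i ≤ p - 1) ∨ (p ≤ j ∧ i ≤ p + q - 2) ∨
      (p + q - 1 ≤ j ∧ i ≤ p + q + r - 3)))

/-- Gram matrix of the lattice `Q(T_{p,q,r})` of the star graph `T_{p,q,r}`:
`-2` on the diagonal, `1` for adjacent vertices, `0` otherwise. -/
noncomputable def starGram (p q r : ℕ) :
    Matrix (Fin (p + q + r - 2)) (Fin (p + q + r - 2)) ℤ :=
  Matrix.of fun i j =>
    if (i : ℕ) = (j : ℕ) then -2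
    else if starAdj p q r (i : ℕ) (j : ℕ) then 1 else 0

/-! ### The fourteen triangle singularities -/

inductive TriType
  | E12 | E13 | E14 | Z11 | Z12 | Z13 | Q10 | Q11 | Q12 | W12 | W13 | S11 | S12 | U12
deriving DecidableEq

/-- The Gabriélov triplet `(p₁, p₂, p₃)`. -/
def triplet : TriType → ℕ × ℕ × ℕ
  | .E12 => (2,3,7) | .E13 => (2,3,8) | .E14 => (2,3,9)
  | .Z11 => (2,4,5) | .Z12 => (2,4,6) | .Z13 => (2,4,7)
  | .Q10 => (3,3,4) | .Q11 => (3,3,5) | .Q12 => (3,3,6)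
  | .W12 => (2,5,5) | .W13 => (2,5,6)
  | .S11 => (3,4,4) | .S12 => (3,4,5)
  | .U12 => (4,4,4)

/-- The Milnor number `μ(T) = p₁ + p₂ + p₃`. -/
def mu (T : TriType) : ℕ := (triplet T).1 + (triplet T).2.1 + (triplet T).2.2

/-- Gram matrix of the Gabriélov lattice `Q(T_{p₁,p₂,p₃})` of type `T`. -/
noncomputable def gabGram (T : TriType) :
    Matrix (Fin (mu T - 2)) (Fin (mu T - 2)) ℤ :=
  starGram (triplet T).1 (triplet T).2.1 (triplet T).2.2

/-- The strange duality involution. -/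
def dual : TriType → TriType
  | .E12 => .E12 | .Z12 => .Z12 | .Q12 => .Q12 | .W12 => .W12 | .S12 => .S12 | .U12 => .U12
  | .E13 => .Z11 | .Z11 => .E13
  | .E14 => .Q10 | .Q10 => .E14
  | .Z13 => .Q11 | .Q11 => .Z13
  | .W13 => .S11 | .S11 => .W13

/-- Rank of the lattice `P(T) = Q(Γ*)`. -/
def Prank (T : TriType) : ℕ := mu (dual T) - 2

/-- Gram matrix of the lattice `P(T)`: the Gabriélov lattice of the dual type `T*`. -/
noncomputable def PGram (T : TriType) : Matrix (Fin (Prank T)) (Fin (Prank T)) ℤ :=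
  gabGram (dual T)

/-! ### The even unimodular lattices `Λ_N = E8(-1) ⊕ E8(-1) ⊕ H^N` -/

/-- Gram matrix of `E8(-1)`; its Dynkin graph is the star graph `T_{2,3,5}`. -/
noncomputable def E8Gram : Matrix (Fin 8) (Fin 8) ℤ := starGram 2 3 5

/-- Gram matrix of the hyperbolic plane `H`. -/
def HGram : Matrix (Fin 2) (Fin 2) ℤ := !![0, 1; 1, 0]

/-- Index type for `Λ_N = E8(-1) ⊕ E8(-1) ⊕ H^N`. -/
abbrev LambdaIx (N : ℕ) := (Fin 8 ⊕ Fin 8) ⊕ (Fin N × Fin 2)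

/-- Gram matrix of `Λ_N = E8(-1) ⊕ E8(-1) ⊕ H^N`. -/
noncomputable def LambdaGram (N : ℕ) : Matrix (LambdaIx N) (LambdaIx N) ℤ :=
  Matrix.of fun i j =>
    match i, j with
    | .inl (.inl a), .inl (.inl b) => E8Gram a b
    | .inl (.inr a), .inl (.inr b) => E8Gram a b
    | .inr (k, a), .inr (l, b) => if k = l then HGram a b else 0
    | _, _ => 0

/-! ### Embeddings, primitive hulls, orthogonal complements -/

/-- An embedding of lattices: an injective `ℤ`-linear map preserving the bilinear forms. -/
def IsEmbedding {ι κ : Type*} [Fintype ι] [Fintype κ]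
    (A : Matrix ι ι ℤ) (B : Matrix κ κ ℤ) (f : (ι → ℤ) →ₗ[ℤ] (κ → ℤ)) : Prop :=
  Function.Injective f ∧ ∀ x y, bilinZ B (f x) (f y) = bilinZ A x y

/-- The primitive hull `M̃ = {x ∈ L : m • x ∈ M for some nonzero scalar m}`. -/
def primHull {R L : Type*} [CommRing R] [IsDomain R] [AddCommGroup L] [Module R L]
    (M : Submodule R L) : Submodule R L where
  carrier := {x | ∃ m : R, m ≠ 0 ∧ m • x ∈ M}
  zero_mem' := ⟨1, one_ne_zero, by simp⟩
  add_mem' := by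
    rintro x y ⟨m, hm, hmx⟩ ⟨n, hn, hny⟩
    refine ⟨m * n, mul_ne_zero hm hn, ?_⟩
    have h : (m * n) • (x + y) = n • (m • x) + m • (n • y) := by
      rw [smul_add, smul_smul, smul_smul, mul_comm n m]
    rw [h]
    exact M.add_mem (M.smul_mem n hmx) (M.smul_mem m hny)
  smul_mem' := by
    rintro c x ⟨m, hm, hmx⟩
    refine ⟨m, hm, ?_⟩
    rw [smul_smul, mul_comm, ← smul_smul]
    exact M.smul_mem c hmx

/-- A submodule is primitive if it coincides with its primitive hull. -/
def IsPrimitive {R L : Type*} [CommRing R] [IsDomain R] [AddCommGroup L] [Module R L]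
    (M : Submodule R L) : Prop :=
  primHull M = M

lemma bilinZ_add_left {ι : Type*} [Fintype ι] (B : Matrix ι ι ℤ) (x y z : ι → ℤ) :
    bilinZ B (x + y) z = bilinZ B x z + bilinZ B y z := by
  simp [bilinZ, add_mul, Finset.sum_add_distrib]

lemma bilinZ_smul_left {ι : Type*} [Fintype ι] (B : Matrix ι ι ℤ) (c : ℤ) (x y : ι → ℤ) :
    bilinZ B (c • x) y = c * bilinZ B x y := by
  simp [bilinZ, Finset.mul_sum, mul_assoc]

/-- The orthogonal complement of a submodule inside the lattice with Gram matrix `B`. -/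
def orthComp {ι : Type*} [Fintype ι] (B : Matrix ι ι ℤ) (M : Submodule ℤ (ι → ℤ)) :
    Submodule ℤ (ι → ℤ) where
  carrier := {x | ∀ m ∈ M, bilinZ B x m = 0}
  zero_mem' := by
    intro m hm
    have : (0 : ι → ℤ) = (0 : ℤ) • (0 : ι → ℤ) := by simp
    rw [this, bilinZ_smul_left]; ring
  add_mem' := by
    intro x y hx hy m hm
    rw [bilinZ_add_left, hx m hm, hy m hm]; ring
  smul_mem' := by
    intro c x hx m hm
    rw [bilinZ_smul_left, hx m hm]; ring

/-! ### The induced rational form on the quotient `Λ/M̃` -/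

/-- Coefficientwise embedding `ℤ^ι → ℚ^ι`. -/
def toQ {ι : Type*} (x : ι → ℤ) : ι → ℚ := fun i => (x i : ℚ)

/-- The `ℚ`-span of a `ℤ`-submodule inside `ℚ^ι`. -/
def spanQ {ι : Type*} (M : Submodule ℤ (ι → ℤ)) : Submodule ℚ (ι → ℚ) :=
  Submodule.span ℚ (toQ '' (M : Set (ι → ℤ)))

/-- The orthogonal projection (with respect to `B`) of a vector onto the `ℚ`-span of `M`,
whenever it exists (and is unique, e.g. when `M` is nondegenerate). -/
noncomputable def projPart {ι : Type*} [Fintype ι] (B : Matrix ι ι ℤ)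
    (M : Submodule ℤ (ι → ℤ)) (x : ι → ℚ) : ι → ℚ :=
  if h : ∃ p ∈ spanQ M, ∀ q ∈ spanQ M, bilinQ B (x - p) q = 0 then h.choose else 0

/-- The canonically induced `ℚ`-valued bilinear form on the quotient `Λ/M̃`,
defined via orthogonal projection onto the orthogonal complement of `M` in `Λ ⊗ ℚ`. -/
noncomputable def inducedForm {ι : Type*} [Fintype ι] (B : Matrix ι ι ℤ)
    (M : Submodule ℤ (ι → ℤ)) (x y : (ι → ℤ) ⧸ primHull M) : ℚ :=
  bilinQ B (toQ x.out - projPart B M (toQ x.out))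
           (toQ y.out - projPart B M (toQ y.out))

/-- `F_N`: the image of the orthogonal complement of `M` under the quotient map `Λ → Λ/M̃`. -/
noncomputable def FNsub {ι : Type*} [Fintype ι] (B : Matrix ι ι ℤ)
    (M : Submodule ℤ (ι → ℤ)) : Submodule ℤ ((ι → ℤ) ⧸ primHull M) :=
  (orthComp B M).map (primHull M).mkQ

/-! ### Root modules and full embeddings -/

/-- A root of the pair `(L, FL)`. -/
def IsRoot {L : Type*} [AddCommGroup L] [Module ℤ L]
    (b : L → L → ℚ) (FL : Submodule ℤ L) (a : L) : Prop :=
  (a ∈ FL ∧ b a a = -2) ∨ b a a = -1 ∨ b a a = -2/3 ∨ (b a a = -1/2 ∧ (2 : ℤ) • a ∈ FL)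

/-- The pair `(L, FL)` is a root module: (R1) `2(x,α)/α²` is an integer for all `x` and
all roots `α`, and (R2) each reflection `s_α(x) = x - (2(x,α)/α²)α` preserves `FL`. -/
def IsRootModule {L : Type*} [AddCommGroup L] [Module ℤ L]
    (b : L → L → ℚ) (FL : Submodule ℤ L) : Prop :=
  (∀ x a : L, IsRoot b FL a → ∃ k : ℤ, 2 * b x a = (k : ℚ) * b a a) ∧
  (∀ a : L, IsRoot b FL a → ∀ x ∈ FL, ∀ k : ℤ,
      2 * b x a = (k : ℚ) * b a a → x - k • a ∈ FL)

/-- A full embedding of the lattice with Gram matrix `A` into the root module `(L, FL)`: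
an injective form-preserving `ℤ`-linear map whose image is full, i.e. every root of the
primitive hull of the image already lies in the image. -/
def IsFullEmbedding {κ : Type*} [Fintype κ] {L : Type*} [AddCommGroup L] [Module ℤ L]
    (A : Matrix κ κ ℤ) (b : L → L → ℚ) (FL : Submodule ℤ L)
    (g : (κ → ℤ) →ₗ[ℤ] L) : Prop :=
  Function.Injective g ∧ (∀ x y, b (g x) (g y) = (bilinZ A x y : ℚ)) ∧
  (∀ a ∈ primHull (LinearMap.range g), IsRoot b FL a → a ∈ LinearMap.range g)

/-! ### Dynkin graphs with components of type A, D, E -/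

/-- A connected Dynkin graph of type `A`, `D` or `E`. -/
inductive ADE
  | A : ℕ → ADE
  | D : ℕ → ADE
  | E : ℕ → ADE
deriving DecidableEq

/-- Each connected ADE graph is a star graph: `A_k = T_{1,1,k}`, `D_ℓ = T_{2,2,ℓ-2}`,
`E_m = T_{2,3,m-3}`. -/
def ADE.triple : ADE → ℕ × ℕ × ℕ
  | .A k => (1, 1, k)
  | .D l => (2, 2, l - 2)
  | .E m => (2, 3, m - 3)

/-- The valid ADE types: `A_k (k ≥ 1)`, `D_ℓ (ℓ ≥ 4)`, `E_6, E_7, E_8`. -/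
def ADE.valid : ADE → Prop
  | .A k => 1 ≤ k
  | .D l => 4 ≤ l
  | .E m => m = 6 ∨ m = 7 ∨ m = 8

/-- Number of vertices of a connected ADE graph. -/
def ADE.rank (c : ADE) : ℕ := c.triple.1 + c.triple.2.1 + c.triple.2.2 - 2

/-- Gram matrix of the root lattice of a connected ADE graph. -/
noncomputable def ADE.gram (c : ADE) : Matrix (Fin c.rank) (Fin c.rank) ℤ :=
  starGram c.triple.1 c.triple.2.1 c.triple.2.2

/-- Vertex set of a Dynkin graph given as a list of connected ADE components. -/
abbrev graphIx (G : List ADE) := (i : Fin G.length) × Fin (G.get i).rank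

/-- Gram matrix of the root lattice `Q(G)` of a Dynkin graph `G` (block diagonal sum
of the Gram matrices of the components). -/
noncomputable def graphGram (G : List ADE) : Matrix (graphIx G) (graphIx G) ℤ :=
  Matrix.of fun a b =>
    if h : a.1 = b.1 then (G.get a.1).gram a.2 (Fin.cast (by rw [h]) b.2) else 0

/-- There is a full embedding of `Q(G)` into the root module `(Λ/M̃, F)` attached to the
submodule `M` of the lattice with Gram matrix `B`. -/
noncomputable def HasFullEmb (G : List ADE) {ι : Type*} [Fintype ι]
    (B : Matrix ι ι ℤ) (M : Submodule ℤ (ι → ℤ)) : Prop :=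
  ∃ g : (graphIx G → ℤ) →ₗ[ℤ] ((ι → ℤ) ⧸ primHull M),
    IsFullEmbedding (graphGram G) (inducedForm B M) (FNsub B M) g



/-! ### Auxiliary machinery for the proof -/

instance starAdjDec (p q r i j : ℕ) : Decidable (starAdj p q r i j) := by
  unfold starAdj; exact inferInstance

/-- Computable copy of `starGram`. -/
def starGramD (p q r : ℕ) :
    Matrix (Fin (p + q + r - 2)) (Fin (p + q + r - 2)) ℤ :=
  Matrix.of fun i j =>
    if (i : ℕ) = (j : ℕ) then -2
    else if starAdj p q r (i : ℕ) (j : ℕ) then 1 else 0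

lemma starGram_eq_D (p q r : ℕ) : starGram p q r = starGramD p q r := by
  ext i j
  simp only [starGram, starGramD, Matrix.of_apply]
  by_cases h1 : (i : ℕ) = (j : ℕ)
  · simp [h1]
  · by_cases h2 : starAdj p q r (i : ℕ) (j : ℕ) <;> simp [h1, h2]

section BilinLemmas

variable {ι : Type*} [Fintype ι] (B : Matrix ι ι ℤ)

lemma bilinQ_toQ (a b : ι → ℤ) : bilinQ B (toQ a) (toQ b) = ((bilinZ B a b : ℤ) : ℚ) := by
  unfold bilinQ bilinZ toQ; push_cast; rfl

lemma bilinQ_add_left' (x y z : ι → ℚ) :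
    bilinQ B (x + y) z = bilinQ B x z + bilinQ B y z := by
  unfold bilinQ
  rw [← Finset.sum_add_distrib]
  refine Finset.sum_congr rfl fun i _ => ?_
  rw [← Finset.sum_add_distrib]
  refine Finset.sum_congr rfl fun j _ => ?_
  simp only [Pi.add_apply]; ring

lemma bilinQ_zero_left (z : ι → ℚ) : bilinQ B 0 z = 0 := by
  unfold bilinQ
  refine Finset.sum_eq_zero fun i _ => Finset.sum_eq_zero fun j _ => ?_
  simp

lemma bilinQ_sub_left (x y z : ι → ℚ) :
    bilinQ B (x - y) z = bilinQ B x z - bilinQ B y z := by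
  unfold bilinQ
  rw [← Finset.sum_sub_distrib]
  refine Finset.sum_congr rfl fun i _ => ?_
  rw [← Finset.sum_sub_distrib]
  refine Finset.sum_congr rfl fun j _ => ?_
  simp only [Pi.sub_apply]; ring

lemma bilinQ_smul_left (c : ℚ) (x z : ι → ℚ) :
    bilinQ B (c • x) z = c * bilinQ B x z := by
  unfold bilinQ
  rw [Finset.mul_sum]
  refine Finset.sum_congr rfl fun i _ => ?_
  rw [Finset.mul_sum]
  refine Finset.sum_congr rfl fun j _ => ?_
  simp only [Pi.smul_apply, smul_eq_mul]; ring

lemma bilinQ_sum_left {α : Type*} (s : Finset α) (F : α → ι → ℚ) (z : ι → ℚ) :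
    bilinQ B (∑ a ∈ s, F a) z = ∑ a ∈ s, bilinQ B (F a) z := by
  classical
  induction s using Finset.induction_on with
  | empty => simpa using bilinQ_zero_left B z
  | @insert a s ha ih =>
      rw [Finset.sum_insert ha, bilinQ_add_left', ih, Finset.sum_insert ha]

lemma bilinQ_comm (hsym : ∀ i j, B i j = B j i) (x y : ι → ℚ) :
    bilinQ B x y = bilinQ B y x := by
  unfold bilinQ
  rw [Finset.sum_comm]
  refine Finset.sum_congr rfl fun j _ => Finset.sum_congr rfl fun i _ => ?_
  rw [hsym i j]; ring

lemma bilinQ_sub_right (x y z : ι → ℚ) :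
    bilinQ B x (y - z) = bilinQ B x y - bilinQ B x z := by
  unfold bilinQ
  rw [← Finset.sum_sub_distrib]
  refine Finset.sum_congr rfl fun i _ => ?_
  rw [← Finset.sum_sub_distrib]
  refine Finset.sum_congr rfl fun j _ => ?_
  simp only [Pi.sub_apply]; ring

lemma toQ_sum {α : Type*} (s : Finset α) (F : α → ι → ℤ) :
    toQ (∑ a ∈ s, F a) = ∑ a ∈ s, toQ (F a) := by
  funext i
  rw [Finset.sum_apply]
  simp [toQ, Finset.sum_apply]

lemma toQ_zsmul (z : ℤ) (a : ι → ℤ) : toQ (z • a) = (z : ℚ) • toQ a := by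
  funext i; simp [toQ]

lemma bilinZ_single {n : ℕ} (A : Matrix (Fin n) (Fin n) ℤ) (i j : Fin n) :
    bilinZ A (Pi.single i 1) (Pi.single j 1) = A i j := by
  unfold bilinZ
  rw [Finset.sum_eq_single i]
  · rw [Finset.sum_eq_single j]
    · simp
    · intro b _ hb; simp [Pi.single_apply, hb]
    · simp
  · intro b _ hb
    refine Finset.sum_eq_zero fun l _ => ?_
    simp [Pi.single_apply, hb]
  · simp

lemma dvd_sub_diag (f : ι → ι → ℤ) (hf : ∀ i j, f i j = f j i) (s : Finset ι) :
    (2 : ℤ) ∣ ((∑ i ∈ s, ∑ j ∈ s, f i j) - ∑ i ∈ s, f i i) := by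
  classical
  induction s using Finset.induction_on with
  | empty => simp
  | @insert a s ha ih =>
      obtain ⟨c, hc⟩ := ih
      refine ⟨(∑ j ∈ s, f a j) + c, ?_⟩
      rw [Finset.sum_insert ha, Finset.sum_insert ha, Finset.sum_insert ha]
      have h1 : ∑ i ∈ s, ∑ j ∈ insert a s, f i j
          = (∑ i ∈ s, f i a) + ∑ i ∈ s, ∑ j ∈ s, f i j := by
        rw [← Finset.sum_add_distrib]
        exact Finset.sum_congr rfl fun i _ => Finset.sum_insert ha
      have h2 : (∑ i ∈ s, f i a) = ∑ j ∈ s, f a j :=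
        Finset.sum_congr rfl fun i _ => hf i a
      rw [h1, h2]
      linarith [hc]

lemma even_bilinZ (hsym : ∀ i j, B i j = B j i) (hdiag : ∀ i, (2:ℤ) ∣ B i i)
    (w : ι → ℤ) : (2 : ℤ) ∣ bilinZ B w w := by
  have h := dvd_sub_diag (fun i j => w i * B i j * w j)
    (fun i j => by show w i * B i j * w j = w j * B j i * w i; rw [hsym i j]; ring)
    Finset.univ
  have hdiag' : (2:ℤ) ∣ ∑ i, w i * B i i * w i :=
    Finset.dvd_sum fun i _ => by
      obtain ⟨c, hc⟩ := hdiag i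
      exact ⟨w i * c * w i, by rw [hc]; ring⟩
  have hsplit : bilinZ B w w
      = ((∑ i, ∑ j, w i * B i j * w j) - ∑ i, w i * B i i * w i)
        + ∑ i, w i * B i i * w i := by
    unfold bilinZ; ring
  rw [hsplit]
  exact dvd_add h hdiag'

end BilinLemmas

lemma dec2 {n : ℕ} (F G : Fin n → Fin n → ℤ)
    (h : @decide (∀ a b, F a b = G a b)
      (@Nat.decidableForallFin _ _ fun a => @Nat.decidableForallFin _ _ fun b =>
        Int.decEq (F a b) (G a b)) = true) : ∀ a b, F a b = G a b :=
  @of_decide_eq_true _ _ h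

lemma E8Gram_symm (a b : Fin 8) : E8Gram a b = E8Gram b a := by
  rw [show E8Gram = starGramD 2 3 5 from starGram_eq_D 2 3 5]
  revert a b; exact dec2 _ _ (by decide)

lemma E8Gram_diag (a : Fin 8) : (2:ℤ) ∣ E8Gram a a := by
  rw [show E8Gram = starGramD 2 3 5 from starGram_eq_D 2 3 5]
  revert a; decide

lemma HGram_symm (a b : Fin 2) : HGram a b = HGram b a := by revert a b; exact dec2 _ _ (by decide)

lemma LambdaGram_symm (N : ℕ) : ∀ i j, LambdaGram N i j = LambdaGram N j i := by
  intro i j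
  rcases i with (a | a) | ⟨kk, a⟩ <;> rcases j with (b | b) | ⟨ll, b⟩
  · exact E8Gram_symm a b
  · rfl
  · rfl
  · rfl
  · exact E8Gram_symm a b
  · rfl
  · rfl
  · rfl
  · show (if kk = ll then HGram a b else 0) = (if ll = kk then HGram b a else 0)
    by_cases hkl : kk = ll
    · subst hkl; simp [HGram_symm a b]
    · simp [hkl, Ne.symm hkl]

lemma LambdaGram_diag (N : ℕ) : ∀ i, (2:ℤ) ∣ LambdaGram N i i := by
  intro i
  rcases i with (a | a) | ⟨kk, a⟩
  · exact E8Gram_diag a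
  · exact E8Gram_diag a
  · show (2:ℤ) ∣ (if kk = kk then HGram a a else 0)
    rw [if_pos rfl]
    exact (by decide : ∀ a : Fin 2, (2:ℤ) ∣ HGram a a) a

lemma sum_prod {n : ℕ} (co : ℤ) (a b : Fin n → ℤ) :
    (∑ i, ∑ j, co * a i * b j) = co * ((∑ i, a i) * (∑ j, b j)) := by
  calc (∑ i, ∑ j, co * a i * b j) = ∑ i, (co * a i) * ∑ j, b j := by
        refine Finset.sum_congr rfl fun i _ => ?_
        rw [← Finset.mul_sum]
    _ = (∑ i, co * a i) * ∑ j, b j := by rw [← Finset.sum_mul]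
    _ = co * ((∑ i, a i) * ∑ j, b j) := by rw [← Finset.mul_sum, mul_assoc]

lemma master_int {n : ℕ} (d : ℕ) (Adj L : Matrix (Fin n) (Fin n) ℤ)
    (h k g : Fin n → ℤ) (al be ga : ℤ)
    (hcert : ∀ i j, Adj i j = al * h i * h j + be * k i * k j +
        ga * (h i * k j + k i * h j) + (d:ℤ) * (L i j + L j i) +
        (if i = j then 2 * (d:ℤ) * g i else 0))
    (hzm : ∀ x y : ZMod (2*d), (al : ZMod (2*d)) * x^2 + (be : ZMod (2*d)) * y^2 +
        2 * (ga : ZMod (2*d)) * x * y ≠ (d : ZMod (2*d)))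
    (t : Fin n → ℤ) (m : ℤ) : bilinZ Adj t t ≠ (d:ℤ) * (2 * m + 1) := by
  intro hEq
  have hterm : ∀ i j : Fin n, t i * Adj i j * t j =
      al * (h i * t i) * (h j * t j) + be * (k i * t i) * (k j * t j) +
      ga * (h i * t i) * (k j * t j) + ga * (k i * t i) * (h j * t j) +
      (d:ℤ) * (t i * L i j * t j) + (d:ℤ) * (t j * L j i * t i) +
      (if i = j then 2*(d:ℤ)*(g i * (t i * t j)) else 0) := by
    intro i j
    rw [hcert i j]
    by_cases hij : i = j
    · subst hij; simp; ring
    · simp [hij]; ring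
  have hite : (∑ i, ∑ j, if i = j then 2*(d:ℤ)*(g i * (t i * t j)) else 0)
      = 2*(d:ℤ) * ∑ i, g i * (t i * t i) := by
    have hin : ∀ i : Fin n, (∑ j, if i = j then 2*(d:ℤ)*(g i * (t i * t j)) else 0)
        = 2*(d:ℤ)*(g i * (t i * t i)) := by
      intro i; rw [Finset.sum_ite_eq]; simp
    rw [Finset.sum_congr rfl fun i _ => hin i, ← Finset.mul_sum]
  have hd2 : (∑ i, ∑ j, (d:ℤ) * (t j * L j i * t i))
      = (d:ℤ) * ∑ i, ∑ j, t i * L i j * t j := by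
    simp only [← Finset.mul_sum]
    exact congrArg (fun z => (d:ℤ) * z) Finset.sum_comm
  have hd1 : (∑ i, ∑ j, (d:ℤ) * (t i * L i j * t j))
      = (d:ℤ) * ∑ i, ∑ j, t i * L i j * t j := by
    simp only [← Finset.mul_sum]
  have hID : bilinZ Adj t t =
      al * (∑ i, h i * t i) * (∑ i, h i * t i) + be * (∑ i, k i * t i) * (∑ i, k i * t i) +
      ga * (∑ i, h i * t i) * (∑ i, k i * t i) + ga * (∑ i, k i * t i) * (∑ i, h i * t i) +
      2*(d:ℤ) * ((∑ i, ∑ j, t i * L i j * t j) + (∑ i, g i * (t i * t i))) := by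
    calc bilinZ Adj t t
        = ∑ i, ∑ j, (al * (h i * t i) * (h j * t j) + be * (k i * t i) * (k j * t j) +
            ga * (h i * t i) * (k j * t j) + ga * (k i * t i) * (h j * t j) +
            (d:ℤ) * (t i * L i j * t j) + (d:ℤ) * (t j * L j i * t i) +
            (if i = j then 2*(d:ℤ)*(g i * (t i * t j)) else 0)) :=
          Finset.sum_congr rfl fun i _ => Finset.sum_congr rfl fun j _ => hterm i j
      _ = (∑ i, ∑ j, al * (h i * t i) * (h j * t j)) +
          (∑ i, ∑ j, be * (k i * t i) * (k j * t j)) +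
          (∑ i, ∑ j, ga * (h i * t i) * (k j * t j)) +
          (∑ i, ∑ j, ga * (k i * t i) * (h j * t j)) +
          (∑ i, ∑ j, (d:ℤ) * (t i * L i j * t j)) +
          (∑ i, ∑ j, (d:ℤ) * (t j * L j i * t i)) +
          (∑ i, ∑ j, if i = j then 2*(d:ℤ)*(g i * (t i * t j)) else 0) := by
          simp only [Finset.sum_add_distrib]
      _ = _ := by
          rw [sum_prod al (fun i => h i * t i) (fun j => h j * t j),
            sum_prod be (fun i => k i * t i) (fun j => k j * t j),
            sum_prod ga (fun i => h i * t i) (fun j => k j * t j),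
            sum_prod ga (fun i => k i * t i) (fun j => h j * t j),
            hd1, hd2, hite]
          ring
  obtain ⟨X, hX⟩ : ∃ X : ℤ, (∑ i, h i * t i) = X := ⟨_, rfl⟩
  obtain ⟨Y, hY⟩ : ∃ Y : ℤ, (∑ i, k i * t i) = Y := ⟨_, rfl⟩
  obtain ⟨SL, hSL⟩ : ∃ S : ℤ, (∑ i, ∑ j, t i * L i j * t j) = S := ⟨_, rfl⟩
  obtain ⟨SG, hSG⟩ : ∃ S : ℤ, (∑ i, g i * (t i * t i)) = S := ⟨_, rfl⟩
  rw [hID, hX, hY, hSL, hSG] at hEq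
  have hcast := congrArg (fun z : ℤ => (z : ZMod (2*d))) hEq
  push_cast at hcast
  have h2 : (2 : ZMod (2*d)) * (d : ZMod (2*d)) = 0 := by
    have := ZMod.natCast_self (2*d); push_cast at this; exact this
  exact hzm (X : ZMod (2*d)) (Y : ZMod (2*d))
    (by linear_combination hcast +
      ((m : ZMod (2*d)) - ((SL : ZMod (2*d)) + (SG : ZMod (2*d)))) * h2)

lemma proj_coeff {n : ℕ} (AQ AdQ : Fin n → Fin n → ℚ) (dd : ℚ) (hdd : dd ≠ 0)
    (hAdjQ : ∀ i j, (∑ l, AQ i l * AdQ l j) = if i = j then dd else 0)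
    (t : Fin n → ℚ) (i : Fin n) :
    (∑ l, (∑ j, AdQ l j / dd * t j) * AQ i l) = t i := by
  calc (∑ l, (∑ j, AdQ l j / dd * t j) * AQ i l)
      = ∑ l, ∑ j, AQ i l * AdQ l j * (t j / dd) := by
        refine Finset.sum_congr rfl fun l _ => ?_
        rw [Finset.sum_mul]
        refine Finset.sum_congr rfl fun j _ => ?_
        ring
    _ = ∑ j, ∑ l, AQ i l * AdQ l j * (t j / dd) := Finset.sum_comm
    _ = ∑ j, (∑ l, AQ i l * AdQ l j) * (t j / dd) := by
        refine Finset.sum_congr rfl fun j _ => ?_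
        rw [← Finset.sum_mul]
    _ = ∑ j, (if i = j then dd else 0) * (t j / dd) := by
        refine Finset.sum_congr rfl fun j _ => ?_
        rw [hAdjQ]
    _ = dd * (t i / dd) := by simp [ite_mul, Finset.sum_ite_eq]
    _ = t i := by field_simp

lemma sum_shuffle {n : ℕ} (AQ AdQ : Fin n → Fin n → ℚ) (dd : ℚ)
    (hAdjQ : ∀ i j, (∑ l, AQ i l * AdQ l j) = if i = j then dd else 0)
    (c t : Fin n → ℚ) (hstar : ∀ j, (∑ i, c i * AQ i j) = t j) :
    (∑ i, ∑ j, t i * AdQ i j * t j) = dd * ∑ l, c l * t l := by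
  calc (∑ i, ∑ j, t i * AdQ i j * t j)
      = ∑ i, ∑ j, (∑ l, c l * AQ l i) * (AdQ i j * t j) := by
        refine Finset.sum_congr rfl fun i _ => Finset.sum_congr rfl fun j _ => ?_
        rw [hstar i]; ring
    _ = ∑ i, ∑ j, ∑ l, c l * (AQ l i * (AdQ i j * t j)) := by
        refine Finset.sum_congr rfl fun i _ => Finset.sum_congr rfl fun j _ => ?_
        rw [Finset.sum_mul]
        refine Finset.sum_congr rfl fun l _ => ?_
        ring
    _ = ∑ i, ∑ l, ∑ j, c l * (AQ l i * (AdQ i j * t j)) :=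
        Finset.sum_congr rfl fun i _ => Finset.sum_comm
    _ = ∑ l, ∑ i, ∑ j, c l * (AQ l i * (AdQ i j * t j)) := Finset.sum_comm
    _ = ∑ l, c l * ∑ j, (∑ i, AQ l i * AdQ i j) * t j := by
        refine Finset.sum_congr rfl fun l _ => ?_
        simp only [← Finset.mul_sum]
        congr 1
        calc ∑ i, AQ l i * ∑ j, AdQ i j * t j
            = ∑ i, ∑ j, AQ l i * (AdQ i j * t j) := by
              refine Finset.sum_congr rfl fun i _ => ?_
              rw [Finset.mul_sum]
          _ = ∑ j, ∑ i, AQ l i * (AdQ i j * t j) := Finset.sum_comm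
          _ = ∑ j, (∑ i, AQ l i * AdQ i j) * t j := by
              refine Finset.sum_congr rfl fun j _ => ?_
              rw [Finset.sum_mul]
              exact Finset.sum_congr rfl fun i _ => by ring
    _ = ∑ l, c l * ∑ j, (if l = j then dd else 0) * t j := by
        refine Finset.sum_congr rfl fun l _ => ?_
        congr 1
        exact Finset.sum_congr rfl fun j _ => by rw [hAdjQ]
    _ = ∑ l, c l * (dd * t l) := by
        refine Finset.sum_congr rfl fun l _ => ?_
        congr 1
        simp [ite_mul, Finset.sum_ite_eq]
    _ = dd * ∑ l, c l * t l := by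
        rw [Finset.mul_sum]
        exact Finset.sum_congr rfl fun l _ => by ring

lemma master_core {nP N : ℕ} (A Adj L : Matrix (Fin nP) (Fin nP) ℤ) (d : ℕ)
    (h k g : Fin nP → ℤ) (al be ga : ℤ) (hd : d ≠ 0)
    (hsymA : ∀ i j, A i j = A j i)
    (hAdj : ∀ i j, (∑ l, A i l * Adj l j) = if i = j then (d:ℤ) else 0)
    (hcert : ∀ i j, Adj i j = al * h i * h j + be * k i * k j +
        ga * (h i * k j + k i * h j) + (d:ℤ) * (L i j + L j i) +
        (if i = j then 2 * (d:ℤ) * g i else 0))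
    (hzm : ∀ x y : ZMod (2*d), (al : ZMod (2*d)) * x^2 + (be : ZMod (2*d)) * y^2 +
        2 * (ga : ZMod (2*d)) * x * y ≠ (d : ZMod (2*d)))
    (f : (Fin nP → ℤ) →ₗ[ℤ] (LambdaIx N → ℤ))
    (hf2 : ∀ x y, bilinZ (LambdaGram N) (f x) (f y) = bilinZ A x y) :
    ∀ w : LambdaIx N → ℤ,
      bilinQ (LambdaGram N) (toQ w - projPart (LambdaGram N) (LinearMap.range f) (toQ w))
        (toQ w - projPart (LambdaGram N) (LinearMap.range f) (toQ w)) ≠ -1 := by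
  have hdQ : ((d:ℚ)) ≠ 0 := Nat.cast_ne_zero.2 hd
  intro w hval
  set B := LambdaGram N with hB
  set M := LinearMap.range f with hM
  set v : LambdaIx N → ℚ := toQ w with hv
  -- basic facts about the images of the standard basis
  have hgram : ∀ i j, bilinQ B (toQ (f (Pi.single i 1))) (toQ (f (Pi.single j 1)))
      = ((A i j : ℤ) : ℚ) := by
    intro i j
    rw [bilinQ_toQ, hf2, bilinZ_single]
  have htq : ∀ jj, bilinQ B v (toQ (f (Pi.single jj 1)))
      = ((bilinZ B w (f (Pi.single jj 1)) : ℤ) : ℚ) := by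
    intro jj; rw [hv, bilinQ_toQ]
  have hfz : ∀ z : Fin nP → ℤ, toQ (f z) = ∑ i, (z i : ℚ) • toQ (f (Pi.single i 1)) := by
    intro z
    have hz1 : z = ∑ i, z i • (Pi.single i (1:ℤ)) := by
      funext j
      rw [Finset.sum_apply]
      simp [Pi.single_apply]
    calc toQ (f z) = toQ (f (∑ i, z i • (Pi.single i (1:ℤ)))) := by rw [← hz1]
      _ = toQ (∑ i, z i • f (Pi.single i (1:ℤ))) := by simp only [map_sum, map_smul]
      _ = ∑ i, toQ (z i • f (Pi.single i (1:ℤ))) := toQ_sum _ _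
      _ = ∑ i, (z i : ℚ) • toQ (f (Pi.single i (1:ℤ))) :=
          Finset.sum_congr rfl fun i _ => toQ_zsmul _ _
  have hgen : ∀ i, toQ (f (Pi.single i 1)) ∈ spanQ M := fun i =>
    Submodule.subset_span ⟨f (Pi.single i 1), ⟨Pi.single i 1, rfl⟩, rfl⟩
  have hspan : spanQ M
      = Submodule.span ℚ (Set.range (fun i => toQ (f (Pi.single i (1:ℤ))))) := by
    apply le_antisymm
    · unfold spanQ
      apply Submodule.span_le.2
      rintro y ⟨mm, hmm, rfl⟩
      obtain ⟨z, rfl⟩ := hmm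
      rw [hfz z]
      exact Submodule.sum_mem _ fun i _ =>
        Submodule.smul_mem _ _ (Submodule.subset_span ⟨i, rfl⟩)
    · apply Submodule.span_le.2
      rintro y ⟨i, rfl⟩
      exact hgen i
  have hAdjQ : ∀ i j, (∑ l, (A i l : ℚ) * (Adj l j : ℚ)) = if i = j then (d:ℚ) else 0 := by
    intro i j
    have hc := hAdj i j
    split_ifs at hc ⊢ <;> exact_mod_cast hc
  -- existence of the orthogonal projection
  have hex : ∃ p ∈ spanQ M, ∀ q ∈ spanQ M, bilinQ B (v - p) q = 0 := by
    refine ⟨∑ l, (∑ j, (Adj l j : ℚ) / (d:ℚ) *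
        ((bilinZ B w (f (Pi.single j 1)) : ℤ) : ℚ)) • toQ (f (Pi.single l 1)), ?_, ?_⟩
    · exact Submodule.sum_mem _ fun l _ => Submodule.smul_mem _ _ (hgen l)
    · have hkey : ∀ i, bilinQ B (v - ∑ l, (∑ j, (Adj l j : ℚ) / (d:ℚ) *
          ((bilinZ B w (f (Pi.single j 1)) : ℤ) : ℚ)) • toQ (f (Pi.single l 1)))
          (toQ (f (Pi.single i 1))) = 0 := by
        intro i
        rw [bilinQ_sub_left, htq i, bilinQ_sum_left]
        have hsm : ∀ l, bilinQ B ((∑ j, (Adj l j : ℚ) / (d:ℚ) *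
            ((bilinZ B w (f (Pi.single j 1)) : ℤ) : ℚ)) • toQ (f (Pi.single l 1)))
            (toQ (f (Pi.single i 1)))
            = (∑ j, (Adj l j : ℚ) / (d:ℚ) *
              ((bilinZ B w (f (Pi.single j 1)) : ℤ) : ℚ)) * ((A i l : ℤ) : ℚ) := by
          intro l
          rw [bilinQ_smul_left, hgram l i]
          rw [show ((A l i : ℤ) : ℚ) = ((A i l : ℤ) : ℚ) from by rw [hsymA l i]]
        rw [Finset.sum_congr rfl fun l _ => hsm l]
        rw [proj_coeff (fun i l => ((A i l : ℤ) : ℚ)) (fun l j => ((Adj l j : ℤ) : ℚ))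
          (d:ℚ) hdQ hAdjQ (fun j => ((bilinZ B w (f (Pi.single j 1)) : ℤ) : ℚ)) i]
        ring
      intro q hq
      rw [hspan] at hq
      obtain ⟨cc, hcc⟩ := (Submodule.mem_span_range_iff_exists_fun ℚ).1 hq
      rw [← hcc]
      have e1 : bilinQ B (v - ∑ l, (∑ j, (Adj l j : ℚ) / (d:ℚ) *
          ((bilinZ B w (f (Pi.single j 1)) : ℤ) : ℚ)) • toQ (f (Pi.single l 1)))
          (∑ i, cc i • toQ (f (Pi.single i (1:ℤ))))
          = ∑ i, cc i * bilinQ B (v - ∑ l, (∑ j, (Adj l j : ℚ) / (d:ℚ) *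
          ((bilinZ B w (f (Pi.single j 1)) : ℤ) : ℚ)) • toQ (f (Pi.single l 1)))
          (toQ (f (Pi.single i (1:ℤ)))) := by
        rw [bilinQ_comm B (LambdaGram_symm N), bilinQ_sum_left]
        refine Finset.sum_congr rfl fun i _ => ?_
        rw [bilinQ_smul_left, bilinQ_comm B (LambdaGram_symm N)]
      rw [e1]
      exact Finset.sum_eq_zero fun i _ => by rw [hkey i, mul_zero]
  -- unfold the projection
  unfold projPart at hval
  rw [dif_pos hex] at hval
  obtain ⟨hmem, horth⟩ := hex.choose_spec
  -- coefficients of the actual projection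
  have hmem' : hex.choose ∈ Submodule.span ℚ
      (Set.range fun i => toQ (f (Pi.single i (1:ℤ)))) := by
    rw [← hspan]; exact hmem
  obtain ⟨cc, hcc⟩ := (Submodule.mem_span_range_iff_exists_fun ℚ).1 hmem'
  have hstar : ∀ jj, (∑ i, cc i * ((A i jj : ℤ) : ℚ))
      = ((bilinZ B w (f (Pi.single jj 1)) : ℤ) : ℚ) := by
    intro jj
    have h0 := horth (toQ (f (Pi.single jj 1))) (hgen jj)
    rw [bilinQ_sub_left, sub_eq_zero, htq jj, ← hcc, bilinQ_sum_left] at h0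
    rw [Finset.sum_congr rfl fun i (_ : i ∈ Finset.univ) =>
      (by rw [bilinQ_smul_left, hgram i jj] :
        bilinQ B (cc i • toQ (f (Pi.single i (1:ℤ)))) (toQ (f (Pi.single jj 1)))
        = cc i * ((A i jj : ℤ) : ℚ))] at h0
    exact h0.symm
  -- compute the value of the induced form
  have hval2 : ((bilinZ B w w : ℤ) : ℚ)
      - ∑ i, cc i * ((bilinZ B w (f (Pi.single i 1)) : ℤ) : ℚ) = -1 := by
    have e2 : bilinQ B (v - hex.choose) (v - hex.choose)
        = bilinQ B (v - hex.choose) v - bilinQ B (v - hex.choose) hex.choose :=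
      bilinQ_sub_right _ _ _ _
    have e3 : bilinQ B (v - hex.choose) hex.choose = 0 := horth hex.choose hmem
    have e4 : bilinQ B (v - hex.choose) v
        = bilinQ B v v - bilinQ B hex.choose v := bilinQ_sub_left _ _ _ _
    have e5 : bilinQ B v v = ((bilinZ B w w : ℤ) : ℚ) := by rw [hv, bilinQ_toQ]
    have e6 : bilinQ B hex.choose v
        = ∑ i, cc i * ((bilinZ B w (f (Pi.single i 1)) : ℤ) : ℚ) := by
      rw [← hcc, bilinQ_sum_left]
      refine Finset.sum_congr rfl fun i _ => ?_
      rw [bilinQ_smul_left, bilinQ_comm B (LambdaGram_symm N), htq i]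
    rw [e2, e3, e4, e5, e6, sub_zero] at hval
    exact hval
  -- pass to the integral quadratic form
  obtain ⟨mm, hmm⟩ := even_bilinZ B (LambdaGram_symm N) (LambdaGram_diag N) w
  have hQ := sum_shuffle (fun i j => ((A i j : ℤ) : ℚ)) (fun i j => ((Adj i j : ℤ) : ℚ))
    (d:ℚ) hAdjQ cc (fun j => ((bilinZ B w (f (Pi.single j 1)) : ℤ) : ℚ)) hstar
  have hcast : ((bilinZ Adj (fun j => bilinZ B w (f (Pi.single j 1)))
      (fun j => bilinZ B w (f (Pi.single j 1))) : ℤ) : ℚ)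
      = ∑ i, ∑ j, ((bilinZ B w (f (Pi.single i 1)) : ℤ) : ℚ) * ((Adj i j : ℤ) : ℚ) *
        ((bilinZ B w (f (Pi.single j 1)) : ℤ) : ℚ) := by
    unfold bilinZ
    push_cast
    rfl
  have hfinal : bilinZ Adj (fun j => bilinZ B w (f (Pi.single j 1)))
      (fun j => bilinZ B w (f (Pi.single j 1))) = (d:ℤ) * (2 * mm + 1) := by
    have hsum : (∑ l, cc l * ((bilinZ B w (f (Pi.single l 1)) : ℤ) : ℚ))
        = ((bilinZ B w w : ℤ) : ℚ) + 1 := by linarith [hval2]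
    have : ((bilinZ Adj (fun j => bilinZ B w (f (Pi.single j 1)))
        (fun j => bilinZ B w (f (Pi.single j 1))) : ℤ) : ℚ)
        = ((d:ℤ) : ℚ) * (2 * (mm : ℚ) + 1) := by
      rw [hcast, hQ, hsum, hmm]
      push_cast
      ring
    exact_mod_cast this
  exact master_int d Adj L h k g al be ga hcert hzm
    (fun j => bilinZ B w (f (Pi.single j 1))) mm hfinal

lemma master {nP N : ℕ} (A Adj L : Matrix (Fin nP) (Fin nP) ℤ) (d : ℕ)
    (h k g : Fin nP → ℤ) (al be ga : ℤ) (hd : d ≠ 0)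
    (hsymA : ∀ i j, A i j = A j i)
    (hAdj : ∀ i j, (∑ l, A i l * Adj l j) = if i = j then (d:ℤ) else 0)
    (hcert : ∀ i j, Adj i j = al * h i * h j + be * k i * k j +
        ga * (h i * k j + k i * h j) + (d:ℤ) * (L i j + L j i) +
        (if i = j then 2 * (d:ℤ) * g i else 0))
    (hzm : ∀ x y : ZMod (2*d), (al : ZMod (2*d)) * x^2 + (be : ZMod (2*d)) * y^2 +
        2 * (ga : ZMod (2*d)) * x * y ≠ (d : ZMod (2*d)))
    (f : (Fin nP → ℤ) →ₗ[ℤ] (LambdaIx N → ℤ))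
    (hf2 : ∀ x y, bilinZ (LambdaGram N) (f x) (f y) = bilinZ A x y) :
    ∀ x : (LambdaIx N → ℤ) ⧸ primHull (LinearMap.range f),
      inducedForm (LambdaGram N) (LinearMap.range f) x x ≠ -1 :=
  fun x hval =>
    master_core A Adj L d h k g al be ga hd hsymA hAdj hcert hzm f hf2 x.out hval

/-! ### Certificate data for the fourteen types -/

def AdjE12 : Matrix (Fin 10) (Fin 10) ℤ :=
  !![42, 21, 28, 14, 36, 30, 24, 18, 12, 6;
    21, 10, 14, 7, 18, 15, 12, 9, 6, 3;
    28, 14, 18, 9, 24, 20, 16, 12, 8, 4;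
    14, 7, 9, 4, 12, 10, 8, 6, 4, 2;
    36, 18, 24, 12, 30, 25, 20, 15, 10, 5;
    30, 15, 20, 10, 25, 20, 16, 12, 8, 4;
    24, 12, 16, 8, 20, 16, 12, 9, 6, 3;
    18, 9, 12, 6, 15, 12, 9, 6, 4, 2;
    12, 6, 8, 4, 10, 8, 6, 4, 2, 1;
    6, 3, 4, 2, 5, 4, 3, 2, 1, 0]

def LmE12 : Matrix (Fin 10) (Fin 10) ℤ :=
  !![0, 0, 0, 0, 0, 0, 0, 0, 0, 0;
    21, 0, 0, 0, 0, 0, 0, 0, 0, 0;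
    28, 14, 0, 0, 0, 0, 0, 0, 0, 0;
    14, 7, 9, 0, 0, 0, 0, 0, 0, 0;
    36, 18, 24, 12, 0, 0, 0, 0, 0, 0;
    30, 15, 20, 10, 25, 0, 0, 0, 0, 0;
    24, 12, 16, 8, 20, 16, 0, 0, 0, 0;
    18, 9, 12, 6, 15, 12, 9, 0, 0, 0;
    12, 6, 8, 4, 10, 8, 6, 4, 0, 0;
    6, 3, 4, 2, 5, 4, 3, 2, 1, 0]

def hvE12 : Fin 10 → ℤ := ![0, 0, 0, 0, 0, 0, 0, 0, 0, 0]

def kvE12 : Fin 10 → ℤ := ![0, 0, 0, 0, 0, 0, 0, 0, 0, 0]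

def gvE12 : Fin 10 → ℤ := ![21, 5, 9, 2, 15, 10, 6, 3, 1, 0]

def AdjE13 : Matrix (Fin 9) (Fin 9) ℤ :=
  !![40, 20, 30, 20, 10, 32, 24, 16, 8;
    20, 9, 15, 10, 5, 16, 12, 8, 4;
    30, 15, 21, 14, 7, 24, 18, 12, 6;
    20, 10, 14, 8, 4, 16, 12, 8, 4;
    10, 5, 7, 4, 1, 8, 6, 4, 2;
    32, 16, 24, 16, 8, 24, 18, 12, 6;
    24, 12, 18, 12, 6, 18, 12, 8, 4;
    16, 8, 12, 8, 4, 12, 8, 4, 2;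
    8, 4, 6, 4, 2, 6, 4, 2, 0]

def LmE13 : Matrix (Fin 9) (Fin 9) ℤ :=
  !![0, 0, 0, 0, 0, 0, 0, 0, 0;
    -15, 0, 0, 0, 0, 0, 0, 0, 0;
    -20, -10, 0, 0, 0, 0, 0, 0, 0;
    -10, -5, -7, 0, 0, 0, 0, 0, 0;
    0, 0, 0, 0, 0, 0, 0, 0, 0;
    -24, -12, -16, -8, 0, 0, 0, 0, 0;
    -18, -9, -12, -6, 0, -15, 0, 0, 0;
    -12, -6, -8, -4, 0, -10, -8, 0, 0;
    -6, -3, -4, -2, 0, -5, -4, -3, 0]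

def hvE13 : Fin 9 → ℤ := ![-10, -5, -7, -4, -1, -8, -6, -4, -2]

def kvE13 : Fin 9 → ℤ := ![0, 0, 0, 0, 0, 0, 0, 0, 0]

def gvE13 : Fin 9 → ℤ := ![-15, -4, -7, -2, 0, -10, -6, -3, -1]

def AdjE14 : Matrix (Fin 8) (Fin 8) ℤ :=
  !![36, 24, 12, 24, 12, 27, 18, 9;
    24, 14, 7, 16, 8, 18, 12, 6;
    12, 7, 2, 8, 4, 9, 6, 3;
    24, 16, 8, 14, 7, 18, 12, 6;
    12, 8, 4, 7, 2, 9, 6, 3;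
    27, 18, 9, 18, 9, 18, 12, 6;
    18, 12, 6, 12, 6, 12, 6, 3;
    9, 6, 3, 6, 3, 6, 3, 0]

def LmE14 : Matrix (Fin 8) (Fin 8) ℤ :=
  !![0, 0, 0, 0, 0, 0, 0, 0;
    4, 0, 0, 0, 0, 0, 0, 0;
    2, 1, 0, 0, 0, 0, 0, 0;
    0, 0, 0, 0, 0, 0, 0, 0;
    -6, -4, -2, -11, 0, 0, 0, 0;
    9, 6, 3, 6, 3, 0, 0, 0;
    6, 4, 2, 4, 2, 4, 0, 0;
    3, 2, 1, 2, 1, 2, 1, 0]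

def hvE14 : Fin 8 → ℤ := ![3, 2, 1, 4, 5, 0, 0, 0]

def kvE14 : Fin 8 → ℤ := ![0, 0, 0, 0, 0, 0, 0, 0]

def gvE14 : Fin 8 → ℤ := ![3, 1, 0, -3, -8, 3, 1, 0]

def AdjQ10 : Matrix (Fin 12) (Fin 12) ℤ :=
  !![54, 27, 36, 18, 48, 42, 36, 30, 24, 18, 12, 6;
    27, 12, 18, 9, 24, 21, 18, 15, 12, 9, 6, 3;
    36, 18, 22, 11, 32, 28, 24, 20, 16, 12, 8, 4;
    18, 9, 11, 4, 16, 14, 12, 10, 8, 6, 4, 2;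
    48, 24, 32, 16, 40, 35, 30, 25, 20, 15, 10, 5;
    42, 21, 28, 14, 35, 28, 24, 20, 16, 12, 8, 4;
    36, 18, 24, 12, 30, 24, 18, 15, 12, 9, 6, 3;
    30, 15, 20, 10, 25, 20, 15, 10, 8, 6, 4, 2;
    24, 12, 16, 8, 20, 16, 12, 8, 4, 3, 2, 1;
    18, 9, 12, 6, 15, 12, 9, 6, 3, 0, 0, 0;
    12, 6, 8, 4, 10, 8, 6, 4, 2, 0, -2, -1;
    6, 3, 4, 2, 5, 4, 3, 2, 1, 0, -1, -2]

def LmQ10 : Matrix (Fin 12) (Fin 12) ℤ :=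
  !![0, 0, 0, 0, 0, 0, 0, 0, 0, 0, 0, 0;
    -15, 0, 0, 0, 0, 0, 0, 0, 0, 0, 0, 0;
    4, 2, 0, 0, 0, 0, 0, 0, 0, 0, 0, 0;
    38, 19, 9, 0, 0, 0, 0, 0, 0, 0, 0, 0;
    -48, -24, 0, 48, 0, 0, 0, 0, 0, 0, 0, 0;
    -42, -21, 0, 42, -63, 0, 0, 0, 0, 0, 0, 0;
    -36, -18, 0, 36, -54, -48, 0, 0, 0, 0, 0, 0;
    -30, -15, 0, 30, -45, -40, -35, 0, 0, 0, 0, 0;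
    -24, -12, 0, 24, -36, -32, -28, -24, 0, 0, 0, 0;
    -18, -9, 0, 18, -27, -24, -21, -18, -15, 0, 0, 0;
    -12, -6, 0, 12, -18, -16, -14, -12, -10, -8, 0, 0;
    -6, -3, 0, 6, -9, -8, -7, -6, -5, -4, -3, 0]

def hvQ10 : Fin 12 → ℤ := ![6, 3, 1, -4, 8, 7, 6, 5, 4, 3, 2, 1]

def kvQ10 : Fin 12 → ℤ := ![0, 0, 0, 0, 0, 0, 0, 0, 0, 0, 0, 0]

def gvQ10 : Fin 12 → ℤ := ![-15, -4, 3, -10, -36, -28, -21, -15, -10, -6, -3, -1]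

def AdjQ11 : Matrix (Fin 11) (Fin 11) ℤ :=
  !![56, 28, 42, 28, 14, 48, 40, 32, 24, 16, 8;
    28, 11, 21, 14, 7, 24, 20, 16, 12, 8, 4;
    42, 21, 27, 18, 9, 36, 30, 24, 18, 12, 6;
    28, 14, 18, 8, 4, 24, 20, 16, 12, 8, 4;
    14, 7, 9, 4, -1, 12, 10, 8, 6, 4, 2;
    48, 24, 36, 24, 12, 36, 30, 24, 18, 12, 6;
    40, 20, 30, 20, 10, 30, 20, 16, 12, 8, 4;
    32, 16, 24, 16, 8, 24, 16, 8, 6, 4, 2;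
    24, 12, 18, 12, 6, 18, 12, 6, 0, 0, 0;
    16, 8, 12, 8, 4, 12, 8, 4, 0, -4, -2;
    8, 4, 6, 4, 2, 6, 4, 2, 0, -2, -4]

def LmQ11 : Matrix (Fin 11) (Fin 11) ℤ :=
  !![0, 0, 0, 0, 0, 0, 0, 0, 0, 0, 0;
    -175, 0, 0, 0, 0, 0, 0, 0, 0, 0, 0;
    -224, -112, 0, 0, 0, 0, 0, 0, 0, 0, 0;
    -98, -49, -63, 0, 0, 0, 0, 0, 0, 0, 0;
    28, 14, 18, 8, 0, 0, 0, 0, 0, 0, 0;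
    -300, -150, -192, -84, 24, 0, 0, 0, 0, 0, 0;
    -250, -125, -160, -70, 20, -215, 0, 0, 0, 0, 0;
    -200, -100, -128, -56, 16, -172, -144, 0, 0, 0, 0;
    -150, -75, -96, -42, 12, -129, -108, -87, 0, 0, 0;
    -100, -50, -64, -28, 8, -86, -72, -58, -44, 0, 0;
    -50, -25, -32, -14, 4, -43, -36, -29, -22, -15, 0]

def hvQ11 : Fin 11 → ℤ := ![-14, -7, -9, -4, 1, -12, -10, -8, -6, -4, -2]

def kvQ11 : Fin 11 → ℤ := ![0, 0, 0, 0, 0, 0, 0, 0, 0, 0, 0]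

def gvQ11 : Fin 11 → ℤ := ![-175, -44, -72, -14, -1, -129, -90, -58, -33, -15, -4]

def AdjQ12 : Matrix (Fin 10) (Fin 10) ℤ :=
  !![54, 36, 18, 36, 18, 45, 36, 27, 18, 9;
    36, 18, 9, 24, 12, 30, 24, 18, 12, 6;
    18, 9, 0, 12, 6, 15, 12, 9, 6, 3;
    36, 24, 12, 18, 9, 30, 24, 18, 12, 6;
    18, 12, 6, 9, 0, 15, 12, 9, 6, 3;
    45, 30, 15, 30, 15, 30, 24, 18, 12, 6;
    36, 24, 12, 24, 12, 24, 12, 9, 6, 3;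
    27, 18, 9, 18, 9, 18, 9, 0, 0, 0;
    18, 12, 6, 12, 6, 12, 6, 0, -6, -3;
    9, 6, 3, 6, 3, 6, 3, 0, -3, -6]

def LmQ12 : Matrix (Fin 10) (Fin 10) ℤ :=
  !![0, 0, 0, 0, 0, 0, 0, 0, 0, 0;
    -44, 0, 0, 0, 0, 0, 0, 0, 0, 0;
    -22, -15, 0, 0, 0, 0, 0, 0, 0, 0;
    -42, -28, -14, 0, 0, 0, 0, 0, 0, 0;
    -18, -12, -6, -9, 0, 0, 0, 0, 0, 0;
    -45, -30, -15, -30, -15, 0, 0, 0, 0, 0;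
    -36, -24, -12, -24, -12, -24, 0, 0, 0, 0;
    -27, -18, -9, -18, -9, -18, -15, 0, 0, 0;
    -18, -12, -6, -12, -6, -12, -10, -8, 0, 0;
    -9, -6, -3, -6, -3, -6, -5, -4, -3, 0]

def hvQ12 : Fin 10 → ℤ := ![3, 2, 1, 4, 5, 0, 0, 0, 0, 0]

def kvQ12 : Fin 10 → ℤ := ![6, 4, 2, 3, 0, 5, 4, 3, 2, 1]

def gvQ12 : Fin 10 → ℤ := ![-33, -15, -4, -13, 0, -15, -10, -6, -3, -1]

def AdjS11 : Matrix (Fin 11) (Fin 11) ℤ :=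
  !![60, 30, 48, 36, 24, 12, 50, 40, 30, 20, 10;
    30, 11, 24, 18, 12, 6, 25, 20, 15, 10, 5;
    48, 24, 32, 24, 16, 8, 40, 32, 24, 16, 8;
    36, 18, 24, 12, 8, 4, 30, 24, 18, 12, 6;
    24, 12, 16, 8, 0, 0, 20, 16, 12, 8, 4;
    12, 6, 8, 4, 0, -4, 10, 8, 6, 4, 2;
    50, 25, 40, 30, 20, 10, 35, 28, 21, 14, 7;
    40, 20, 32, 24, 16, 8, 28, 16, 12, 8, 4;
    30, 15, 24, 18, 12, 6, 21, 12, 3, 2, 1;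
    20, 10, 16, 12, 8, 4, 14, 8, 2, -4, -2;
    10, 5, 8, 6, 4, 2, 7, 4, 1, -2, -5]

def LmS11 : Matrix (Fin 11) (Fin 11) ℤ :=
  !![0, 0, 0, 0, 0, 0, 0, 0, 0, 0, 0;
    1, 0, 0, 0, 0, 0, 0, 0, 0, 0, 0;
    -16, -8, 0, 0, 0, 0, 0, 0, 0, 0, 0;
    -34, -17, -151, 0, 0, 0, 0, 0, 0, 0, 0;
    -52, -26, -218, -384, 0, 0, 0, 0, 0, 0, 0;
    -70, -35, -285, -500, -715, 0, 0, 0, 0, 0, 0;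
    20, 10, 60, 100, 140, 180, 0, 0, 0, 0, 0;
    16, 8, 48, 80, 112, 144, -24, 0, 0, 0, 0;
    12, 6, 36, 60, 84, 108, -18, -15, 0, 0, 0;
    8, 4, 24, 40, 56, 72, -12, -10, -8, 0, 0;
    4, 2, 12, 20, 28, 36, -6, -5, -4, -3, 0]

def hvS11 : Fin 11 → ℤ := ![-2, -1, -8, -14, -20, -26, 5, 4, 3, 2, 1]

def kvS11 : Fin 11 → ℤ := ![0, 0, 0, 0, 0, 0, 0, 0, 0, 0, 0]

def gvS11 : Fin 11 → ℤ := ![1, 0, -42, -134, -275, -465, -15, -10, -6, -3, -1]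

def AdjS12 : Matrix (Fin 10) (Fin 10) ℤ :=
  !![60, 40, 20, 45, 30, 15, 48, 36, 24, 12;
    40, 18, 9, 30, 20, 10, 32, 24, 16, 8;
    20, 9, -2, 15, 10, 5, 16, 12, 8, 4;
    45, 30, 15, 24, 16, 8, 36, 27, 18, 9;
    30, 20, 10, 16, 2, 1, 24, 18, 12, 6;
    15, 10, 5, 8, 1, -6, 12, 9, 6, 3;
    48, 32, 16, 36, 24, 12, 28, 21, 14, 7;
    36, 24, 12, 27, 18, 9, 21, 6, 4, 2;
    24, 16, 8, 18, 12, 6, 14, 4, -6, -3;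
    12, 8, 4, 9, 6, 3, 7, 2, -3, -8]

def LmS12 : Matrix (Fin 10) (Fin 10) ℤ :=
  !![0, 0, 0, 0, 0, 0, 0, 0, 0, 0;
    -20, 0, 0, 0, 0, 0, 0, 0, 0, 0;
    -10, -7, 0, 0, 0, 0, 0, 0, 0, 0;
    -15, -10, -5, 0, 0, 0, 0, 0, 0, 0;
    0, 0, 0, 0, 0, 0, 0, 0, 0, 0;
    15, 10, 5, 8, 1, 0, 0, 0, 0, 0;
    -24, -16, -8, -12, 0, 12, 0, 0, 0, 0;
    -18, -12, -6, -9, 0, 9, -15, 0, 0, 0;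
    -12, -8, -4, -6, 0, 6, -10, -8, 0, 0;
    -6, -4, -2, -3, 0, 3, -5, -4, -3, 0]

def hvS12 : Fin 10 → ℤ := ![-15, -10, -5, -8, -1, 6, -12, -9, -6, -3]

def kvS12 : Fin 10 → ℤ := ![0, 0, 0, 0, 0, 0, 0, 0, 0, 0]

def gvS12 : Fin 10 → ℤ := ![-15, -7, -2, -4, 0, -3, -10, -6, -3, -1]

def AdjU12 : Matrix (Fin 10) (Fin 10) ℤ :=
  !![64, 48, 32, 16, 48, 32, 16, 48, 32, 16;
    48, 24, 16, 8, 36, 24, 12, 36, 24, 12;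
    32, 16, 0, 0, 24, 16, 8, 24, 16, 8;
    16, 8, 0, -8, 12, 8, 4, 12, 8, 4;
    48, 36, 24, 12, 24, 16, 8, 36, 24, 12;
    32, 24, 16, 8, 16, 0, 0, 24, 16, 8;
    16, 12, 8, 4, 8, 0, -8, 12, 8, 4;
    48, 36, 24, 12, 36, 24, 12, 24, 16, 8;
    32, 24, 16, 8, 24, 16, 8, 16, 0, 0;
    16, 12, 8, 4, 12, 8, 4, 8, 0, -8]

def LmU12 : Matrix (Fin 10) (Fin 10) ℤ :=
  !![0, 0, 0, 0, 0, 0, 0, 0, 0, 0;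
    -39, 0, 0, 0, 0, 0, 0, 0, 0, 0;
    -26, -20, 0, 0, 0, 0, 0, 0, 0, 0;
    -13, -10, -7, 0, 0, 0, 0, 0, 0, 0;
    -40, -30, -20, -10, 0, 0, 0, 0, 0, 0;
    -28, -21, -14, -7, -23, 0, 0, 0, 0, 0;
    -16, -12, -8, -4, -14, -12, 0, 0, 0, 0;
    -24, -18, -12, -6, -18, -12, -6, 0, 0, 0;
    -16, -12, -8, -4, -12, -8, -4, -8, 0, 0;
    -8, -6, -4, -2, -6, -4, -2, -4, -3, 0]

def hvU12 : Fin 10 → ℤ := ![4, 3, 2, 1, 5, 6, 7, 0, 0, 0]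

def kvU12 : Fin 10 → ℤ := ![4, 3, 2, 1, 2, 0, -2, 3, 2, 1]

def gvU12 : Fin 10 → ℤ := ![-26, -15, -7, -2, -16, -9, -5, -6, -3, -1]

def AdjW12 : Matrix (Fin 10) (Fin 10) ℤ :=
  !![50, 25, 40, 30, 20, 10, 40, 30, 20, 10;
    25, 10, 20, 15, 10, 5, 20, 15, 10, 5;
    40, 20, 28, 21, 14, 7, 32, 24, 16, 8;
    30, 15, 21, 12, 8, 4, 24, 18, 12, 6;
    20, 10, 14, 8, 2, 1, 16, 12, 8, 4;
    10, 5, 7, 4, 1, -2, 8, 6, 4, 2;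
    40, 20, 32, 24, 16, 8, 28, 21, 14, 7;
    30, 15, 24, 18, 12, 6, 21, 12, 8, 4;
    20, 10, 16, 12, 8, 4, 14, 8, 2, 1;
    10, 5, 8, 6, 4, 2, 7, 4, 1, -2]

def LmW12 : Matrix (Fin 10) (Fin 10) ℤ :=
  !![0, 0, 0, 0, 0, 0, 0, 0, 0, 0;
    5, 0, 0, 0, 0, 0, 0, 0, 0, 0;
    8, 4, 0, 0, 0, 0, 0, 0, 0, 0;
    6, 3, -47, 0, 0, 0, 0, 0, 0, 0;
    4, 2, -74, -152, 0, 0, 0, 0, 0, 0;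
    2, 1, -101, -204, -307, 0, 0, 0, 0, 0;
    8, 4, 32, 56, 80, 104, 0, 0, 0, 0;
    6, 3, 24, 42, 60, 78, -15, 0, 0, 0;
    4, 2, 16, 28, 40, 52, -10, -8, 0, 0;
    2, 1, 8, 14, 20, 26, -5, -4, -3, 0]

def hvW12 : Fin 10 → ℤ := ![0, 0, -4, -8, -12, -16, 4, 3, 2, 1]

def kvW12 : Fin 10 → ℤ := ![0, 0, 0, 0, 0, 0, 0, 0, 0, 0]

def gvW12 : Fin 10 → ℤ := ![5, 1, -10, -50, -115, -205, -10, -6, -3, -1]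

def AdjW13 : Matrix (Fin 9) (Fin 9) ℤ :=
  !![48, 32, 16, 36, 24, 12, 36, 24, 12;
    32, 16, 8, 24, 16, 8, 24, 16, 8;
    16, 8, 0, 12, 8, 4, 12, 8, 4;
    36, 24, 12, 21, 14, 7, 27, 18, 9;
    24, 16, 8, 14, 4, 2, 18, 12, 6;
    12, 8, 4, 7, 2, -3, 9, 6, 3;
    36, 24, 12, 27, 18, 9, 21, 14, 7;
    24, 16, 8, 18, 12, 6, 14, 4, 2;
    12, 8, 4, 9, 6, 3, 7, 2, -3]

def LmW13 : Matrix (Fin 9) (Fin 9) ℤ :=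
  !![0, 0, 0, 0, 0, 0, 0, 0, 0;
    -152, 0, 0, 0, 0, 0, 0, 0, 0;
    -76, -51, 0, 0, 0, 0, 0, 0, 0;
    -249, -166, -83, 0, 0, 0, 0, 0, 0;
    -270, -180, -90, -294, 0, 0, 0, 0, 0;
    -291, -194, -97, -316, -341, 0, 0, 0, 0;
    -54, -36, -18, -60, -66, -72, 0, 0, 0;
    -36, -24, -12, -40, -44, -48, -8, 0, 0;
    -18, -12, -6, -20, -22, -24, -4, -3, 0]

def hvW13 : Fin 9 → ℤ := ![12, 8, 4, 13, 14, 15, 3, 2, 1]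

def kvW13 : Fin 9 → ℤ := ![0, 0, 0, 0, 0, 0, 0, 0, 0]

def gvW13 : Fin 9 → ℤ := ![-114, -51, -13, -136, -159, -183, -6, -3, -1]

def AdjZ11 : Matrix (Fin 11) (Fin 11) ℤ :=
  !![48, 24, 32, 16, 42, 36, 30, 24, 18, 12, 6;
    24, 11, 16, 8, 21, 18, 15, 12, 9, 6, 3;
    32, 16, 20, 10, 28, 24, 20, 16, 12, 8, 4;
    16, 8, 10, 4, 14, 12, 10, 8, 6, 4, 2;
    42, 21, 28, 14, 35, 30, 25, 20, 15, 10, 5;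
    36, 18, 24, 12, 30, 24, 20, 16, 12, 8, 4;
    30, 15, 20, 10, 25, 20, 15, 12, 9, 6, 3;
    24, 12, 16, 8, 20, 16, 12, 8, 6, 4, 2;
    18, 9, 12, 6, 15, 12, 9, 6, 3, 2, 1;
    12, 6, 8, 4, 10, 8, 6, 4, 2, 0, 0;
    6, 3, 4, 2, 5, 4, 3, 2, 1, 0, -1]

def LmZ11 : Matrix (Fin 11) (Fin 11) ℤ :=
  !![0, 0, 0, 0, 0, 0, 0, 0, 0, 0, 0;
    -15, 0, 0, 0, 0, 0, 0, 0, 0, 0, 0;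
    -2, -1, 0, 0, 0, 0, 0, 0, 0, 0, 0;
    26, 13, 11, 0, 0, 0, 0, 0, 0, 0, 0;
    -42, -21, -7, 28, 0, 0, 0, 0, 0, 0, 0;
    -36, -18, -6, 24, -48, 0, 0, 0, 0, 0, 0;
    -30, -15, -5, 20, -40, -35, 0, 0, 0, 0, 0;
    -24, -12, -4, 16, -32, -28, -24, 0, 0, 0, 0;
    -18, -9, -3, 12, -24, -21, -18, -15, 0, 0, 0;
    -12, -6, -2, 8, -16, -14, -12, -10, -8, 0, 0;
    -6, -3, -1, 4, -8, -7, -6, -5, -4, -3, 0]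

def hvZ11 : Fin 11 → ℤ := ![6, 3, 2, -2, 7, 6, 5, 4, 3, 2, 1]

def kvZ11 : Fin 11 → ℤ := ![0, 0, 0, 0, 0, 0, 0, 0, 0, 0, 0]

def gvZ11 : Fin 11 → ℤ := ![-15, -4, 2, -2, -28, -21, -15, -10, -6, -3, -1]

def AdjZ12 : Matrix (Fin 10) (Fin 10) ℤ :=
  !![48, 24, 36, 24, 12, 40, 32, 24, 16, 8;
    24, 10, 18, 12, 6, 20, 16, 12, 8, 4;
    36, 18, 24, 16, 8, 30, 24, 18, 12, 6;
    24, 12, 16, 8, 4, 20, 16, 12, 8, 4;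
    12, 6, 8, 4, 0, 10, 8, 6, 4, 2;
    40, 20, 30, 20, 10, 30, 24, 18, 12, 6;
    32, 16, 24, 16, 8, 24, 16, 12, 8, 4;
    24, 12, 18, 12, 6, 18, 12, 6, 4, 2;
    16, 8, 12, 8, 4, 12, 8, 4, 0, 0;
    8, 4, 6, 4, 2, 6, 4, 2, 0, -2]

def LmZ12 : Matrix (Fin 10) (Fin 10) ℤ :=
  !![0, 0, 0, 0, 0, 0, 0, 0, 0, 0;
    -27, 0, 0, 0, 0, 0, 0, 0, 0, 0;
    -40, -20, 0, 0, 0, 0, 0, 0, 0, 0;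
    -26, -13, -19, 0, 0, 0, 0, 0, 0, 0;
    -12, -6, -8, -4, 0, 0, 0, 0, 0, 0;
    -40, -20, -30, -20, -10, 0, 0, 0, 0, 0;
    -32, -16, -24, -16, -8, -24, 0, 0, 0, 0;
    -24, -12, -18, -12, -6, -18, -15, 0, 0, 0;
    -16, -8, -12, -8, -4, -12, -10, -8, 0, 0;
    -8, -4, -6, -4, -2, -6, -5, -4, -3, 0]

def hvZ12 : Fin 10 → ℤ := ![2, 1, 3, 4, 5, 0, 0, 0, 0, 0]

def kvZ12 : Fin 10 → ℤ := ![6, 3, 4, 2, 0, 5, 4, 3, 2, 1]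

def gvZ12 : Fin 10 → ℤ := ![-27, -7, -15, -6, 0, -15, -10, -6, -3, -1]

def AdjZ13 : Matrix (Fin 9) (Fin 9) ℤ :=
  !![45, 30, 15, 30, 15, 36, 27, 18, 9;
    30, 16, 8, 20, 10, 24, 18, 12, 6;
    15, 8, 1, 10, 5, 12, 9, 6, 3;
    30, 20, 10, 16, 8, 24, 18, 12, 6;
    15, 10, 5, 8, 1, 12, 9, 6, 3;
    36, 24, 12, 24, 12, 24, 18, 12, 6;
    27, 18, 9, 18, 9, 18, 9, 6, 3;
    18, 12, 6, 12, 6, 12, 6, 0, 0;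
    9, 6, 3, 6, 3, 6, 3, 0, -3]

def LmZ13 : Matrix (Fin 9) (Fin 9) ℤ :=
  !![0, 0, 0, 0, 0, 0, 0, 0, 0;
    -20, 0, 0, 0, 0, 0, 0, 0, 0;
    -10, -7, 0, 0, 0, 0, 0, 0, 0;
    -15, -10, -5, 0, 0, 0, 0, 0, 0;
    0, 0, 0, 0, 0, 0, 0, 0, 0;
    -24, -16, -8, -12, 0, 0, 0, 0, 0;
    -18, -12, -6, -9, 0, -15, 0, 0, 0;
    -12, -8, -4, -6, 0, -10, -8, 0, 0;
    -6, -4, -2, -3, 0, -5, -4, -3, 0]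

def hvZ13 : Fin 9 → ℤ := ![-15, -10, -5, -8, -1, -12, -9, -6, -3]

def kvZ13 : Fin 9 → ℤ := ![0, 0, 0, 0, 0, 0, 0, 0, 0]

def gvZ13 : Fin 9 → ℤ := ![-15, -7, -2, -4, 0, -10, -6, -3, -1]

set_option maxHeartbeats 2000000

/-- for `N ≥ 1`, any `T`, and any embedding of `P(T)` into `Λ_N`, the
quasi-lattice `Λ_N/P̃` contains no element `β` with `β² = -1`. -/
theorem statement_5 (N : ℕ) (hN : 1 ≤ N) (T : TriType)
    (f : (Fin (Prank T) → ℤ) →ₗ[ℤ] (LambdaIx N → ℤ))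
    (hf : IsEmbedding (PGram T) (LambdaGram N) f) :
    ∀ x : (LambdaIx N → ℤ) ⧸ primHull (LinearMap.range f),
      inducedForm (LambdaGram N) (LinearMap.range f) x x ≠ -1 := by
  cases T with
  | E12 =>
      exact master (starGramD 2 3 7) AdjE12 LmE12 1 hvE12 kvE12 gvE12 0 0 0
        (by decide) (dec2 _ _ (by decide)) (by decide) (dec2 _ _ (by decide)) (by decide) f
        (fun x y => (hf.2 x y).trans
          (by rw [show PGram TriType.E12 = starGramD 2 3 7 from starGram_eq_D 2 3 7]; rfl))
  | E13 =>
      exact master (starGramD 2 4 5) AdjE13 LmE13 2 hvE13 kvE13 gvE13 1 0 0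
        (by decide) (dec2 _ _ (by decide)) (by decide) (dec2 _ _ (by decide)) (by decide) f
        (fun x y => (hf.2 x y).trans
          (by rw [show PGram TriType.E13 = starGramD 2 4 5 from starGram_eq_D 2 4 5]; rfl))
  | E14 =>
      exact master (starGramD 3 3 4) AdjE14 LmE14 3 hvE14 kvE14 gvE14 2 0 0
        (by decide) (dec2 _ _ (by decide)) (by decide) (dec2 _ _ (by decide)) (by decide) f
        (fun x y => (hf.2 x y).trans
          (by rw [show PGram TriType.E14 = starGramD 3 3 4 from starGram_eq_D 3 3 4]; rfl))
  | Z11 =>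
      exact master (starGramD 2 3 8) AdjZ11 LmZ11 2 hvZ11 kvZ11 gvZ11 3 0 0
        (by decide) (dec2 _ _ (by decide)) (by decide) (dec2 _ _ (by decide)) (by decide) f
        (fun x y => (hf.2 x y).trans
          (by rw [show PGram TriType.Z11 = starGramD 2 3 8 from starGram_eq_D 2 3 8]; rfl))
  | Z12 =>
      exact master (starGramD 2 4 6) AdjZ12 LmZ12 4 hvZ12 kvZ12 gvZ12 0 6 2
        (by decide) (dec2 _ _ (by decide)) (by decide) (dec2 _ _ (by decide)) (by decide) f
        (fun x y => (hf.2 x y).trans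
          (by rw [show PGram TriType.Z12 = starGramD 2 4 6 from starGram_eq_D 2 4 6]; rfl))
  | Z13 =>
      exact master (starGramD 3 3 5) AdjZ13 LmZ13 6 hvZ13 kvZ13 gvZ13 1 0 0
        (by decide) (dec2 _ _ (by decide)) (by decide) (dec2 _ _ (by decide)) (by decide) f
        (fun x y => (hf.2 x y).trans
          (by rw [show PGram TriType.Z13 = starGramD 3 3 5 from starGram_eq_D 3 3 5]; rfl))
  | Q10 =>
      exact master (starGramD 2 3 9) AdjQ10 LmQ10 3 hvQ10 kvQ10 gvQ10 4 0 0
        (by decide) (dec2 _ _ (by decide)) (by decide) (dec2 _ _ (by decide)) (by decide) f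
        (fun x y => (hf.2 x y).trans
          (by rw [show PGram TriType.Q10 = starGramD 2 3 9 from starGram_eq_D 2 3 9]; rfl))
  | Q11 =>
      exact master (starGramD 2 4 7) AdjQ11 LmQ11 6 hvQ11 kvQ11 gvQ11 11 0 0
        (by decide) (dec2 _ _ (by decide)) (by decide) (dec2 _ _ (by decide)) (by decide) f
        (fun x y => (hf.2 x y).trans
          (by rw [show PGram TriType.Q11 = starGramD 2 4 7 from starGram_eq_D 2 4 7]; rfl))
  | Q12 =>
      exact master (starGramD 3 3 6) AdjQ12 LmQ12 9 hvQ12 kvQ12 gvQ12 0 12 6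
        (by decide) (dec2 _ _ (by decide)) (by decide) (dec2 _ _ (by decide)) (by decide) f
        (fun x y => (hf.2 x y).trans
          (by rw [show PGram TriType.Q12 = starGramD 3 3 6 from starGram_eq_D 3 3 6]; rfl))
  | W12 =>
      exact master (starGramD 2 5 5) AdjW12 LmW12 5 hvW12 kvW12 gvW12 8 0 0
        (by decide) (dec2 _ _ (by decide)) (by decide) (dec2 _ _ (by decide)) (by decide) f
        (fun x y => (hf.2 x y).trans
          (by rw [show PGram TriType.W12 = starGramD 2 5 5 from starGram_eq_D 2 5 5]; rfl))
  | W13 =>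
      exact master (starGramD 3 4 4) AdjW13 LmW13 8 hvW13 kvW13 gvW13 13 0 0
        (by decide) (dec2 _ _ (by decide)) (by decide) (dec2 _ _ (by decide)) (by decide) f
        (fun x y => (hf.2 x y).trans
          (by rw [show PGram TriType.W13 = starGramD 3 4 4 from starGram_eq_D 3 4 4]; rfl))
  | S11 =>
      exact master (starGramD 2 5 6) AdjS11 LmS11 8 hvS11 kvS11 gvS11 11 0 0
        (by decide) (dec2 _ _ (by decide)) (by decide) (dec2 _ _ (by decide)) (by decide) f
        (fun x y => (hf.2 x y).trans
          (by rw [show PGram TriType.S11 = starGramD 2 5 6 from starGram_eq_D 2 5 6]; rfl))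
  | S12 =>
      exact master (starGramD 3 4 5) AdjS12 LmS12 13 hvS12 kvS12 gvS12 2 0 0
        (by decide) (dec2 _ _ (by decide)) (by decide) (dec2 _ _ (by decide)) (by decide) f
        (fun x y => (hf.2 x y).trans
          (by rw [show PGram TriType.S12 = starGramD 3 4 5 from starGram_eq_D 3 4 5]; rfl))
  | U12 =>
      exact master (starGramD 4 4 4) AdjU12 LmU12 16 hvU12 kvU12 gvU12 8 24 12
        (by decide) (dec2 _ _ (by decide)) (by decide) (dec2 _ _ (by decide)) (by decide) f
        (fun x y => (hf.2 x y).trans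
          (by rw [show PGram TriType.U12 = starGramD 4 4 4 from starGram_eq_D 4 4 4]; rfl))

end Urabe
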